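/- arXiv:2509.09182 — 2 statements merged into one kernel-verified Lean document; each statement's English description precedes it below -/
import Mathlib

section
/- Let K > 0, b > −2, and η > 0, and consider a random variable with quantile density function q(v) = K v^b (1−v)^{−(a+b)} with a + b = −1, i.e., q(v) = K v^b (1−v). Then its quantile-based fractional generalized cumulative past entropy equals K [1/(b+2)^{η+1} − 1/(b+3)^{η+1}]; that is, (1/Γ(η+1)) ∫₀¹ p (−ln p)^η K p^b (1−p) dp = K [(b+2)^{−(η+1)} − (b+3)^{−(η+1)}]. -/
open MeasureTheory Real Set

lemma exp_neg_image : (fun t : ℝ => Real.exp (-t)) '' Set.Ioi 0 = Set.Ioo 0 1 := by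
  ext x
  constructor
  · rintro ⟨t, ht, rfl⟩
    have ht' : (0:ℝ) < t := ht
    exact ⟨Real.exp_pos _, Real.exp_lt_one_iff.mpr (by linarith)⟩
  · rintro ⟨hx0, hx1⟩
    exact ⟨-Real.log x, by simp [Set.mem_Ioi]; exact Real.log_neg hx0 hx1,
      by simp [Real.exp_log hx0]⟩

lemma key (c η : ℝ) (hc : 0 < c) (hη : 0 ≤ η) :
    IntegrableOn (fun p => (-Real.log p) ^ η * p ^ (c - 1)) (Set.Ioo 0 1) ∧
    ∫ p in Set.Ioo (0:ℝ) 1, (-Real.log p) ^ η * p ^ (c - 1)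
      = Real.Gamma (η + 1) / c ^ (η + 1) := by
  have hderiv : ∀ t ∈ Set.Ioi (0:ℝ),
      HasDerivWithinAt (fun t : ℝ => Real.exp (-t)) (-Real.exp (-t)) (Set.Ioi 0) t := by
    intro t _
    simpa [Function.comp_def] using ((Real.hasDerivAt_exp (-t)).comp t (hasDerivAt_neg t)).hasDerivWithinAt
  have hinj : Set.InjOn (fun t : ℝ => Real.exp (-t)) (Set.Ioi 0) := by
    intro a _ b _ h
    have := Real.exp_injective h
    linarith
  have hms : MeasurableSet (Set.Ioi (0:ℝ)) := measurableSet_Ioi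
  -- the transformed integrand
  have hcongr : ∀ t ∈ Set.Ioi (0:ℝ),
      |(-Real.exp (-t))| • ((-Real.log (Real.exp (-t))) ^ η * (Real.exp (-t)) ^ (c - 1))
        = Real.exp (-(c * t)) * t ^ η := by
    intro t _
    have h1 : -Real.log (Real.exp (-t)) = t := by simp
    have h2 : (Real.exp (-t)) ^ (c - 1) = Real.exp (-t * (c - 1)) := by
      rw [Real.rpow_def_of_pos (Real.exp_pos _), Real.log_exp]
    rw [h1, h2, abs_neg, abs_of_pos (Real.exp_pos _)]
    rw [smul_eq_mul, show -(c * t) = -t + -t * (c - 1) by ring, Real.exp_add]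
    ring
  -- Gamma integral comp mul left
  have hGamma : Real.Gamma (η + 1) = ∫ x in Set.Ioi (0:ℝ), Real.exp (-x) * x ^ η := by
    rw [Real.Gamma_eq_integral (by linarith)]
    simp
  have hcomp := MeasureTheory.integral_comp_mul_left_Ioi
      (fun x => Real.exp (-x) * x ^ η) 0 hc
  rw [mul_zero] at hcomp
  have hval : ∫ t in Set.Ioi (0:ℝ), Real.exp (-(c * t)) * t ^ η
      = Real.Gamma (η + 1) / c ^ (η + 1) := by
    have hrw : ∀ t ∈ Set.Ioi (0:ℝ),
        Real.exp (-(c * t)) * (c * t) ^ η = c ^ η * (Real.exp (-(c * t)) * t ^ η) := by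
      intro t ht
      rw [Real.mul_rpow hc.le (le_of_lt ht)]
      ring
    rw [MeasureTheory.setIntegral_congr_fun hms hrw, MeasureTheory.integral_const_mul] at hcomp
    have hcne : c ^ η ≠ 0 := (Real.rpow_pos_of_pos hc η).ne'
    have : ∫ t in Set.Ioi (0:ℝ), Real.exp (-(c * t)) * t ^ η
        = c⁻¹ * (c ^ η)⁻¹ * Real.Gamma (η + 1) := by
      rw [hGamma]
      rw [smul_eq_mul] at hcomp
      field_simp at hcomp ⊢
      linarith [hcomp]
    rw [this, Real.rpow_add hc, Real.rpow_one, div_eq_mul_inv, mul_inv_rev]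
    ring
  -- integrability on Ioi of transformed
  have hint : IntegrableOn (fun t => Real.exp (-(c * t)) * t ^ η) (Set.Ioi (0:ℝ)) := by
    have := (Real.GammaIntegral_convergent (s := η + 1) (by linarith))
    simp only [add_sub_cancel_right] at this
    have h2 : IntegrableOn (fun x => Real.exp (-(c * x)) * (c * x) ^ η) (Set.Ioi (0:ℝ)) := by
      have h := (MeasureTheory.integrableOn_Ioi_comp_mul_left_iff
        (fun x => Real.exp (-x) * x ^ η) 0 hc).mpr (by simpa using this)
      simpa using h
    have h3 : IntegrableOn (fun x => c ^ η * (Real.exp (-(c * x)) * x ^ η)) (Set.Ioi (0:ℝ)) := by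
      apply h2.congr_fun _ hms
      intro t ht
      simp only
      rw [Real.mul_rpow hc.le (le_of_lt (Set.mem_Ioi.mp ht))]; ring
    exact (integrable_const_mul_iff (isUnit_iff_ne_zero.mpr (Real.rpow_pos_of_pos hc η).ne') _).mp h3
  constructor
  · rw [← exp_neg_image]
    rw [MeasureTheory.integrableOn_image_iff_integrableOn_abs_deriv_smul hms hderiv hinj]
    exact (hint.congr_fun (fun t ht => (hcongr t ht).symm) hms)
  · rw [← exp_neg_image,
      MeasureTheory.integral_image_eq_integral_abs_deriv_smul hms hderiv hinj,
      MeasureTheory.setIntegral_congr_fun hms hcongr, hval]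

/-- For a random variable with quantile density `q(v) = K v^b (1-v)^{-(a+b)}`
in the case `a + b = -1`, i.e. `q(v) = K v^b (1-v)`, the QFGCPE equals
`K [1/(b+2)^(η+1) - 1/(b+3)^(η+1)]`. -/
theorem qfgcpe_case_sum_neg_one (K b η : ℝ) (hK : 0 < K) (hb : -2 < b) (hη : 0 < η) :
    (1 / Real.Gamma (η + 1)) *
        ∫ p in (0 : ℝ)..1, p * (-Real.log p) ^ η * (K * p ^ b * (1 - p))
      = K * (1 / (b + 2) ^ (η + 1) - 1 / (b + 3) ^ (η + 1)) := by
  obtain ⟨hI1, hV1⟩ := key (b + 2) η (by linarith) hη.le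
  obtain ⟨hI2, hV2⟩ := key (b + 3) η (by linarith) hη.le
  have hms : MeasurableSet (Set.Ioo (0:ℝ) 1) := measurableSet_Ioo
  have hΓ : 0 < Real.Gamma (η + 1) := Real.Gamma_pos_of_pos (by linarith)
  rw [intervalIntegral.integral_of_le zero_le_one,
    MeasureTheory.integral_Ioc_eq_integral_Ioo]
  have hcongr : ∀ p ∈ Set.Ioo (0:ℝ) 1,
      p * (-Real.log p) ^ η * (K * p ^ b * (1 - p))
        = K * ((-Real.log p) ^ η * p ^ (b + 2 - 1))
          - K * ((-Real.log p) ^ η * p ^ (b + 3 - 1)) := by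
    intro p hp
    have hp0 : (0:ℝ) < p := hp.1
    have h1 : p ^ (b + 2 - 1) = p ^ b * p := by
      rw [show b + 2 - 1 = b + 1 by ring, Real.rpow_add_one hp0.ne' b]
    have h2 : p ^ (b + 3 - 1) = p ^ b * p * p := by
      rw [show b + 3 - 1 = b + 1 + 1 by ring, Real.rpow_add_one hp0.ne',
        Real.rpow_add_one hp0.ne' b]
    rw [h1, h2]; ring
  rw [MeasureTheory.setIntegral_congr_fun hms hcongr,
    MeasureTheory.integral_sub (hI1.const_mul K) (hI2.const_mul K),
    MeasureTheory.integral_const_mul, MeasureTheory.integral_const_mul, hV1, hV2]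
  have h2 : ((b:ℝ) + 2) ^ (η + 1) ≠ 0 := (Real.rpow_pos_of_pos (by linarith) _).ne'
  have h3 : ((b:ℝ) + 3) ^ (η + 1) ≠ 0 := (Real.rpow_pos_of_pos (by linarith) _).ne'
  field_simp
end

section
/- For λ > 0, η > 0 and v ∈ (0,1), the dynamic quantile-based fractional generalized cumulative past entropy of the exponential distribution with rate λ, whose quantile density is q(p) = 1/(λ(1−p)), equals (Li_{η+1}(v) − v)/(λ v); that is, (1/(v Γ(η+1))) ∫₀^v p (ln v − ln p)^η / (λ(1−p)) dp = (1/(λ v)) ( Σ_{k=1}^∞ v^k / k^{η+1} − v ). -/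
open MeasureTheory Real

/-- The polylogarithm `Li_s(v) = Σ_{k ≥ 1} v^k / k^s` (real arguments). -/
noncomputable def polylog (s v : ℝ) : ℝ := ∑' k : ℕ, v ^ (k + 1) / ((k : ℝ) + 1) ^ s

section Aux
lemma image_exp_map (v : ℝ) (hv : 0 < v) :
    (fun u : ℝ => v * Real.exp (-u)) '' Set.Ioi 0 = Set.Ioo 0 v := by
  ext p
  constructor
  · rintro ⟨u, hu, rfl⟩
    have := Real.exp_pos (-u)
    constructor
    · positivity
    · have h1 : Real.exp (-u) < 1 := by
        rw [Real.exp_lt_one_iff]; simpa using hu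
      calc v * Real.exp (-u) < v * 1 := by nlinarith
        _ = v := mul_one v
  · rintro ⟨hp0, hpv⟩
    refine ⟨Real.log v - Real.log p, ?_, ?_⟩
    · simpa using Real.log_lt_log hp0 hpv
    · show v * Real.exp (-(Real.log v - Real.log p)) = p
      rw [neg_sub, Real.exp_sub, Real.exp_log hp0, Real.exp_log hv]
      field_simp

lemma key_integral (n : ℕ) (η v : ℝ) (hη : 0 < η) (hv : 0 < v) :
    ∫ p in Set.Ioo (0:ℝ) v, p ^ n * (Real.log v - Real.log p) ^ η
      = v ^ (n+1) * Real.Gamma (η + 1) / ((n:ℝ)+1) ^ (η+1) := by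
  have hinj : Set.InjOn (fun u : ℝ => v * Real.exp (-u)) (Set.Ioi 0) := by
    intro a _ b _ h
    simp only at h
    have := Real.exp_injective (mul_left_cancel₀ (ne_of_gt hv) h)
    linarith [neg_injective this]
  have hderiv : ∀ u ∈ Set.Ioi (0:ℝ), HasDerivWithinAt (fun u : ℝ => v * Real.exp (-u))
      (-(v * Real.exp (-u))) (Set.Ioi 0) u := by
    intro u _
    have : HasDerivAt (fun u : ℝ => v * Real.exp (-u)) (v * (Real.exp (-u) * (-1))) u := by
      exact (((hasDerivAt_neg u)).exp.const_mul v)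
    simpa [mul_comm, mul_assoc] using this.hasDerivWithinAt
  rw [← image_exp_map v hv,
    integral_image_eq_integral_abs_deriv_smul measurableSet_Ioi hderiv hinj]
  have habs : ∀ u ∈ Set.Ioi (0:ℝ), |(-(v * Real.exp (-u)))| = v * Real.exp (-u) := by
    intro u _; rw [abs_neg, abs_of_pos (by positivity)]
  rw [setIntegral_congr_fun measurableSet_Ioi (g := fun u =>
      v ^ (n+1) * (u ^ η * Real.exp (-(((n:ℝ)+1) * u)))) ?_]
  · rw [integral_const_mul]
    have h2 := integral_rpow_mul_exp_neg_mul_Ioi (a := η+1) (r := (n:ℝ)+1)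
      (by positivity) (by positivity)
    rw [add_sub_cancel_right] at h2
    rw [h2, Real.div_rpow zero_le_one (by positivity), Real.one_rpow]
    field_simp
  · intro u hu
    have hu' : (0:ℝ) < u := hu
    simp only [smul_eq_mul]
    rw [habs u hu]
    have hlog : Real.log v - Real.log (v * Real.exp (-u)) = u := by
      rw [Real.log_mul (ne_of_gt hv) (ne_of_gt (Real.exp_pos _)), Real.log_exp]; ring
    rw [hlog, mul_pow]
    rw [← Real.exp_nat_mul]
    rw [show -(((n:ℝ)+1) * u) = -u + (n:ℝ) * -u by ring, Real.exp_add]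
    ring

lemma key_integrable (n : ℕ) (η v : ℝ) (hη : 0 < η) (hv : 0 < v) :
    IntegrableOn (fun p => p ^ n * (Real.log v - Real.log p) ^ η) (Set.Ioo (0:ℝ) v) := by
  have hinj : Set.InjOn (fun u : ℝ => v * Real.exp (-u)) (Set.Ioi 0) := by
    intro a _ b _ h
    simp only at h
    have := Real.exp_injective (mul_left_cancel₀ (ne_of_gt hv) h)
    linarith [neg_injective this]
  have hderiv : ∀ u ∈ Set.Ioi (0:ℝ), HasDerivWithinAt (fun u : ℝ => v * Real.exp (-u))
      (-(v * Real.exp (-u))) (Set.Ioi 0) u := by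
    intro u _
    have : HasDerivAt (fun u : ℝ => v * Real.exp (-u)) (v * (Real.exp (-u) * (-1))) u :=
      (((hasDerivAt_neg u)).exp.const_mul v)
    simpa [mul_comm, mul_assoc] using this.hasDerivWithinAt
  rw [← image_exp_map v hv,
    integrableOn_image_iff_integrableOn_abs_deriv_smul measurableSet_Ioi hderiv hinj]
  have base : IntegrableOn (fun u : ℝ => u ^ η * Real.exp (-(((n:ℝ)+1) * u))) (Set.Ioi 0) := by
    have := integrableOn_rpow_mul_exp_neg_mul_rpow (s := η) (p := 1) (b := (n:ℝ)+1)
      (by linarith) zero_lt_one (by positivity)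
    refine this.congr_fun (fun u hu => ?_) measurableSet_Ioi
    beta_reduce
    rw [Real.rpow_one]
    ring_nf
  have base2 : IntegrableOn (fun u : ℝ => v ^ (n+1) * (u ^ η * Real.exp (-(((n:ℝ)+1) * u))))
      (Set.Ioi 0) := base.const_mul _
  refine base2.congr_fun (fun u hu => ?_) measurableSet_Ioi
  have hu' : (0:ℝ) < u := hu
  simp only [smul_eq_mul]
  rw [abs_neg, abs_of_pos (by positivity)]
  have hlog : Real.log v - Real.log (v * Real.exp (-u)) = u := by
    rw [Real.log_mul (ne_of_gt hv) (ne_of_gt (Real.exp_pos _)), Real.log_exp]; ring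
  rw [hlog, mul_pow, ← Real.exp_nat_mul,
    show -(((n:ℝ)+1) * u) = -u + (n:ℝ) * -u from by ring, Real.exp_add]
  ring
end Aux

/-- The dynamic QFGCPE of the exponential distribution with rate `λ`,
whose quantile density is `q(p) = 1/(λ(1-p))`, equals `(Li_{η+1}(v) - v)/(λ v)`. -/

theorem dqfgcpe_exponential (lam η v : ℝ) (hlam : 0 < lam) (hη : 0 < η)
    (hv : v ∈ Set.Ioo (0 : ℝ) 1) :
    (1 / (v * Real.Gamma (η + 1))) *
        ∫ p in (0 : ℝ)..v, p * (Real.log v - Real.log p) ^ η / (lam * (1 - p))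
      = (1 / (lam * v)) * (polylog (η + 1) v - v) := by
  obtain ⟨hv0, hv1⟩ := hv
  have hΓ : 0 < Real.Gamma (η + 1) := Real.Gamma_pos_of_pos (by linarith)
  set g : ℕ → ℝ → ℝ := fun k p => (1/lam) * (p ^ (k+1) * (Real.log v - Real.log p) ^ η) with hg
  have hint : ∀ k : ℕ, IntegrableOn (g k) (Set.Ioo (0:ℝ) v) := by
    intro k
    exact (key_integrable (k+1) η v hη hv0).const_mul _
  have hval : ∀ k : ℕ, ∫ p in Set.Ioo (0:ℝ) v, g k p
      = (1/lam) * (v ^ (k+2) * Real.Gamma (η+1) / ((k:ℝ)+1+1) ^ (η+1)) := by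
    intro k
    rw [hg]
    simp only
    rw [MeasureTheory.integral_const_mul, key_integral (k+1) η v hη hv0]
    push_cast
    ring_nf
  have hnn : ∀ k : ℕ, ∀ p ∈ Set.Ioo (0:ℝ) v, 0 ≤ g k p := by
    intro k p hp
    have h1 : (0:ℝ) ≤ Real.log v - Real.log p :=
      sub_nonneg.mpr (Real.log_le_log hp.1 hp.2.le)
    have := Real.rpow_nonneg h1 η
    have hp0 := hp.1
    positivity
  have hnorm : ∀ k : ℕ, ∫ p in Set.Ioo (0:ℝ) v, ‖g k p‖ = ∫ p in Set.Ioo (0:ℝ) v, g k p := by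
    intro k
    refine setIntegral_congr_fun measurableSet_Ioo (fun p hp => ?_)
    rw [Real.norm_eq_abs, abs_of_nonneg (hnn k p hp)]
  have hsumgeo : Summable (fun k : ℕ => (1/lam * Real.Gamma (η+1) * v^2) * v ^ k) :=
    (summable_geometric_of_lt_one hv0.le hv1).mul_left _
  have hd1 : ∀ k : ℕ, (1:ℝ) ≤ ((k:ℝ)+1+1) ^ (η+1) := by
    intro k
    exact Real.one_le_rpow (by linarith [Nat.cast_nonneg (α := ℝ) k]) (by linarith)
  have hsum : Summable fun k : ℕ => ∫ p in Set.Ioo (0:ℝ) v, ‖g k p‖ := by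
    simp_rw [hnorm, hval]
    refine Summable.of_nonneg_of_le (fun k => by positivity) (fun k => ?_) hsumgeo
    have hdk := hd1 k
    calc (1/lam) * (v ^ (k+2) * Real.Gamma (η+1) / ((k:ℝ)+1+1) ^ (η+1))
        ≤ (1/lam) * (v ^ (k+2) * Real.Gamma (η+1)) := by
          have h2 : v ^ (k+2) * Real.Gamma (η+1) / ((k:ℝ)+1+1) ^ (η+1)
              ≤ v ^ (k+2) * Real.Gamma (η+1) := div_le_self (by positivity) hdk
          have hl : (0:ℝ) ≤ 1/lam := by positivity
          exact mul_le_mul_of_nonneg_left h2 hl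
      _ = (1/lam * Real.Gamma (η+1) * v^2) * v ^ k := by rw [pow_add]; ring
  have hinter := MeasureTheory.integral_tsum_of_summable_integral_norm hint hsum
  have hpt : ∀ p ∈ Set.Ioo (0:ℝ) v,
      (∑' k : ℕ, g k p) = p * (Real.log v - Real.log p) ^ η / (lam * (1 - p)) := by
    intro p hp
    have hp1 : p < 1 := hp.2.trans hv1
    have hp0 : 0 < p := hp.1
    have hgeo : ∑' k : ℕ, p ^ k = (1 - p)⁻¹ := tsum_geometric_of_lt_one hp0.le hp1
    rw [hg]
    simp only
    rw [tsum_mul_left]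
    have : (∑' k : ℕ, p ^ (k+1) * (Real.log v - Real.log p) ^ η)
        = (∑' k : ℕ, p ^ k) * (p * (Real.log v - Real.log p) ^ η) := by
      rw [← tsum_mul_right]
      congr 1 with k
      rw [pow_succ]; ring
    rw [this, hgeo]
    have h1p : (1:ℝ) - p ≠ 0 := by linarith
    field_simp
  rw [intervalIntegral.integral_of_le hv0.le, MeasureTheory.integral_Ioc_eq_integral_Ioo,
    ← setIntegral_congr_fun measurableSet_Ioo hpt, ← hinter]
  simp_rw [hval]
  -- polylog side
  have hplsum : Summable (fun k : ℕ => v ^ (k+1) / ((k:ℝ)+1) ^ (η+1)) := by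
    refine Summable.of_nonneg_of_le (fun k => by positivity) (fun k => ?_)
      ((summable_geometric_of_lt_one hv0.le hv1).mul_left v)
    have h1 : (1:ℝ) ≤ ((k:ℝ)+1) ^ (η+1) := Real.one_le_rpow (by linarith [Nat.cast_nonneg (α := ℝ) k]) (by linarith)
    calc v ^ (k+1) / ((k:ℝ)+1) ^ (η+1) ≤ v ^ (k+1) := div_le_self (by positivity) h1
      _ = v * v ^ k := by rw [pow_succ]; ring
  have hshift : polylog (η+1) v = v + ∑' k : ℕ, v ^ (k+2) / ((k:ℝ)+1+1) ^ (η+1) := by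
    rw [show polylog (η+1) v = ∑' k : ℕ, v ^ (k + 1) / ((k : ℝ) + 1) ^ (η+1) from rfl,
      Summable.tsum_eq_zero_add hplsum]
    congr 1
    · norm_num [Real.one_rpow]
    · congr 1 with k
      push_cast
      ring_nf
  rw [hshift]
  rw [show (fun k : ℕ => (1/lam) * (v ^ (k+2) * Real.Gamma (η+1) / ((k:ℝ)+1+1) ^ (η+1)))
      = (fun k : ℕ => (Real.Gamma (η+1)/lam) * (v ^ (k+2) / ((k:ℝ)+1+1) ^ (η+1))) from by
        funext k; ring, tsum_mul_left]
  field_simp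
  ring
end
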